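/- arXiv:1402.1450 — 2 statements merged into one kernel-verified Lean document; each statement's English description precedes it below -/
import Mathlib

section
/- Let D ⊆ ℝ^p be compact and let f : D → ℝ be continuous. For every ε > 0 there exists a finite linear combination ψ(x) = Σ_{i=1}^n c_i exp(−‖x − z_i‖²/λ²) with centers z_i ∈ ℝ^p and real coefficients c_i such that sup_{x ∈ D} |f(x) − ψ(x)| ≤ ε. -/
/-!
By completing the square,
`exp (-‖x - z‖² / λ²) = exp (-‖z‖² / λ²) · exp (2⟪x, z⟫ / λ²) · exp (-‖x‖² / λ²)`,
so approximating `f` by Gaussian bumps on `D` amounts to approximating `f · exp (‖x‖² / λ²)` by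
linear combinations of the exponentials `exp ⟪x, w⟫`, up to the factor `exp (-‖x‖² / λ²) ≤ 1`.
These exponentials contain `1` and are closed under multiplication, so their span is a subalgebra
of `C(D, ℝ)`; it separates points (take `w = x - y`), hence is dense by Stone–Weierstrass.
-/

open Real RealInnerProductSpace Set Algebra

section ExpInner

variable {E : Type*} [NormedAddCommGroup E] [InnerProductSpace ℝ E] (K : Set E)

noncomputable def expInner (w : E) : C(K, ℝ) :=
  ⟨fun x => exp ⟪(x : E), w⟫, by fun_prop⟩

variable {K}

@[simp]
theorem expInner_apply (w : E) (x : K) : expInner K w x = exp ⟪(x : E), w⟫ := rfl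

theorem expInner_zero : expInner K 0 = 1 := by
  ext x
  simp

theorem expInner_add (v w : E) : expInner K (v + w) = expInner K v * expInner K w := by
  ext x
  simp [inner_add_right, exp_add]

variable (K)

theorem toSubmodule_adjoin_range_expInner :
    Subalgebra.toSubmodule (adjoin ℝ (range (expInner K))) =
      Submodule.span ℝ (range (expInner K)) := by
  refine adjoin_eq_span_of_subset ℝ (Subset.trans ?_ Submodule.subset_span)
  intro g hg
  refine Submonoid.closure_induction (fun _ => id) ⟨0, expInner_zero⟩ ?_ hg
  rintro - - - - ⟨v, rfl⟩ ⟨w, rfl⟩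
  exact ⟨v + w, expInner_add v w⟩

theorem separatesPoints_adjoin_range_expInner :
    (adjoin ℝ (range (expInner K))).SeparatesPoints := by
  intro x y hxy
  refine ⟨expInner K (x - y), ⟨_, subset_adjoin ⟨x - y, rfl⟩, rfl⟩, fun h => hxy ?_⟩
  have hinner : ⟪(x : E) - y, (x : E) - y⟫ = 0 := by
    rw [inner_sub_left, exp_injective h, sub_self]
  exact Subtype.ext (sub_eq_zero.mp (inner_self_eq_zero.mp hinner))

variable {K}

theorem exists_sum_exp_inner_near (hK : IsCompact K) {g : E → ℝ} (hg : ContinuousOn g K)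
    {ε : ℝ} (hε : 0 < ε) :
    ∃ (n : ℕ) (c : Fin n → ℝ) (w : Fin n → E),
      ∀ x ∈ K, |g x - ∑ i, c i * exp ⟪x, w i⟫| < ε := by
  have := isCompact_iff_compactSpace.mp hK
  obtain ⟨⟨h, hh⟩, hclose⟩ :=
    ContinuousMap.exists_mem_subalgebra_near_continuous_of_separatesPoints _
      (separatesPoints_adjoin_range_expInner K) _ hg.domRestrict ε hε
  rw [← Subalgebra.mem_toSubmodule, toSubmodule_adjoin_range_expInner,
    Submodule.mem_span_set'] at hh
  obtain ⟨n, c, e, rfl⟩ := hh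
  choose w hw using fun i => (e i).2
  refine ⟨n, c, w, fun x hx => ?_⟩
  rw [abs_sub_comm]
  simpa [← hw] using hclose ⟨x, hx⟩

theorem exp_inner_mul_exp_neg_sq_norm {lam : ℝ} (hlam : lam ≠ 0) (x w : E) :
    exp ⟪x, w⟫ * exp (-‖x‖ ^ 2 / lam ^ 2) =
      exp (‖(lam ^ 2 / 2) • w‖ ^ 2 / lam ^ 2) * exp (-‖x - (lam ^ 2 / 2) • w‖ ^ 2 / lam ^ 2) := by
  rw [← exp_add, ← exp_add, norm_sub_sq_real, real_inner_smul_right]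
  congr 1
  field_simp
  ring

end ExpInner

/-- Universality of the squared-exponential kernel: on a compact `D ⊆ ℝ^p`, every continuous
function can be uniformly approximated by finite linear combinations of Gaussian bumps. -/
theorem gaussian_kernel_universal (p : ℕ) (D : Set (EuclideanSpace ℝ (Fin p)))
    (hD : IsCompact D) (f : EuclideanSpace ℝ (Fin p) → ℝ) (hf : ContinuousOn f D)
    (lam : ℝ) (hlam : 0 < lam) (ε : ℝ) (hε : 0 < ε) :
    ∃ (n : ℕ) (c : Fin n → ℝ) (z : Fin n → EuclideanSpace ℝ (Fin p)),
      ∀ x ∈ D, |f x - ∑ i, c i * Real.exp (-‖x - z i‖ ^ 2 / lam ^ 2)| ≤ ε := by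
  obtain ⟨n, c, w, hw⟩ := exists_sum_exp_inner_near hD
    (hf.mul (g := fun x => exp (‖x‖ ^ 2 / lam ^ 2)) (by fun_prop)) hε
  refine ⟨n, fun i => c i * exp (‖(lam ^ 2 / 2) • w i‖ ^ 2 / lam ^ 2),
    fun i => (lam ^ 2 / 2) • w i, fun x hx => ?_⟩
  have hweight : exp (-‖x‖ ^ 2 / lam ^ 2) ≤ 1 :=
    exp_le_one_iff.mpr (div_nonpos_of_nonpos_of_nonneg (neg_nonpos.mpr (by positivity))
      (by positivity))
  have hfactor : f x - ∑ i, c i * exp (‖(lam ^ 2 / 2) • w i‖ ^ 2 / lam ^ 2) *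
      exp (-‖x - (lam ^ 2 / 2) • w i‖ ^ 2 / lam ^ 2) =
      (f x * exp (‖x‖ ^ 2 / lam ^ 2) - ∑ i, c i * exp ⟪x, w i⟫) * exp (-‖x‖ ^ 2 / lam ^ 2) := by
    simp_rw [sub_mul, Finset.sum_mul, mul_assoc, exp_inner_mul_exp_neg_sq_norm hlam.ne',
      ← exp_add, neg_div, add_neg_cancel, exp_zero, mul_one]
  calc _ = |f x * exp (‖x‖ ^ 2 / lam ^ 2) - ∑ i, c i * exp ⟪x, w i⟫| *
        exp (-‖x‖ ^ 2 / lam ^ 2) := by rw [hfactor, abs_mul, abs_of_pos (exp_pos _)]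
    _ ≤ ε * 1 := mul_le_mul (hw x hx).le hweight (exp_pos _).le hε.le
    _ = ε := mul_one ε
end

section
/- Let k(x, y) = exp(−(x−y)²/λ²) be the squared exponential kernel on ℝ and let x₁, …, x_n be pairwise distinct points. Then the Gram matrix K with K_{ij} = k(x_i, x_j) is strictly positive definite (invertible). -/
/-!
Since `(a - b)² = a² - 2ab + b²`, the Gram matrix is `D E D` with `D` the positive diagonal matrix
`diag (exp (-xᵢ² / λ²))` and `Eᵢⱼ = exp (c xᵢ xⱼ)`, `c = 2 / λ²`. Expanding the exponential,
`wᵀ E w = ∑ₘ cᵐ / m! (∑ⱼ wⱼ xⱼᵐ)²`, a series of nonnegative terms; for `w ≠ 0` one of the first `n`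
terms is positive because the Vandermonde matrix of distinct points is invertible.
-/

open Finset Matrix Nat

theorem hasSum_sum_sum_mul_exp_mul_mul {ι : Type*} [Fintype ι] (c : ℝ) (x w : ι → ℝ) :
    HasSum (fun m : ℕ => c ^ m / m ! * (∑ i, w i * x i ^ m) ^ 2)
      (∑ i, ∑ j, w i * w j * Real.exp (c * x i * x j)) := by
  have hterm (i j : ι) : HasSum (fun m : ℕ => w i * w j * ((c * x i * x j) ^ m / m !))
      (w i * w j * Real.exp (c * x i * x j)) := by
    rw [Real.exp_eq_exp_ℝ]
    exact (NormedSpace.expSeries_div_hasSum_exp (c * x i * x j)).mul_left (w i * w j)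
  convert hasSum_sum fun i _ => hasSum_sum fun j _ => hterm i j using 1
  funext m
  rw [sq, sum_mul_sum, mul_sum]
  refine sum_congr rfl fun i _ => mul_sum _ _ _ |>.trans <| sum_congr rfl fun j _ => ?_
  ring

theorem posDef_exp_mul_mul_of_injective {n : ℕ} {c : ℝ} (hc : 0 < c) {x : Fin n → ℝ}
    (hx : Function.Injective x) :
    (Matrix.of fun i j : Fin n => Real.exp (c * x i * x j)).PosDef := by
  refine .of_dotProduct_mulVec_pos ?_ fun w hw => ?_
  · ext i j
    simp only [conjTranspose_apply, of_apply, star_trivial]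
    ring_nf
  obtain ⟨m, hm⟩ : ∃ m : Fin n, ∑ j, w j * x j ^ (m : ℕ) ≠ 0 := by
    contrapose! hw
    exact eq_zero_of_forall_pow_sum_mul_pow_eq_zero hx hw
  have hform : star w ⬝ᵥ (Matrix.of (fun i j => Real.exp (c * x i * x j)) *ᵥ w) =
      ∑ i, ∑ j, w i * w j * Real.exp (c * x i * x j) := by
    simp only [dotProduct, mulVec, star_trivial, of_apply, mul_sum]
    exact sum_congr rfl fun i _ => sum_congr rfl fun j _ => by ring
  rw [hform]
  refine hasSum_lt (f := 0) (fun k => by positivity) (i := (m : ℕ)) ?_ hasSum_zero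
    (hasSum_sum_sum_mul_exp_mul_mul c x w)
  simp only [Pi.zero_apply]
  positivity

theorem exp_neg_sub_sq_div (a b lam2 : ℝ) (hlam : lam2 ≠ 0) :
    Real.exp (-(a - b) ^ 2 / lam2) =
      Real.exp (-a ^ 2 / lam2) * Real.exp (2 / lam2 * a * b) * Real.exp (-b ^ 2 / lam2) := by
  rw [← Real.exp_add, ← Real.exp_add]
  congr 1
  field_simp
  ring

/-- Strict positive definiteness of the squared exponential kernel: the Gram matrix
`K_{ij} = exp(−(x_i − x_j)²/λ²)` at pairwise distinct points is positive definite
(hence invertible). -/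
theorem squaredExponential_gram_posDef (n : ℕ) (lam2 : ℝ) (hlam : 0 < lam2)
    (x : Fin n → ℝ) (hx : Function.Injective x) :
    (Matrix.of fun i j : Fin n => Real.exp (-(x i - x j) ^ 2 / lam2)).PosDef ∧
    IsUnit (Matrix.of fun i j : Fin n => Real.exp (-(x i - x j) ^ 2 / lam2)).det := by
  set D := diagonal fun i => Real.exp (-x i ^ 2 / lam2)
  have hD : Function.Injective D.mulVec :=
    mulVec_injective_iff_isUnit.mpr <| isUnit_diagonal.mpr <|
      Pi.isUnit_iff.mpr fun i => (Real.exp_pos _).ne'.isUnit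
  have hK : (Matrix.of fun i j : Fin n => Real.exp (-(x i - x j) ^ 2 / lam2)) =
      Dᴴ * Matrix.of (fun i j => Real.exp (2 / lam2 * x i * x j)) * D := by
    ext i j
    simp [D, exp_neg_sub_sq_div _ _ _ hlam.ne']
  have hpos : (Matrix.of fun i j : Fin n => Real.exp (-(x i - x j) ^ 2 / lam2)).PosDef := by
    rw [hK]
    exact (posDef_exp_mul_mul_of_injective (by positivity) hx).conjTranspose_mul_mul_same hD
  exact ⟨hpos, (isUnit_iff_isUnit_det _).mp hpos.isUnit⟩
end
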